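/- arXiv:1301.0810 — 2 statements merged into one kernel-verified Lean document; each statement's English description precedes it below -/
import Mathlib

section
/- Let X be a finite-dimensional real normed space with dual X*, and let A ⊂ X be a nonempty closed set such that the recession cone P := (cl conv A)_∞ of the closed convex hull of A is pointed. Then for every x* ∈ int P⁻ the set W_A(x*) := {a ∈ A : ⟨a, x*⟩ = σ_A(x*)} is nonempty and compact; in particular the supremum defining σ_A(x*) is attained on A. -/
open Set Filter Topology Pointwise

variable {X : Type*} [NormedAddCommGroup X] [NormedSpace ℝ X]

/-- The support function `σ_A : X* → ℝ ∪ {+∞}`, `σ_A(x*) = sup {⟨a, x*⟩ : a ∈ A}`,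
taking values in `EReal`. -/
noncomputable def supportFn (A : Set X) (f : X →L[ℝ] ℝ) : EReal :=
  ⨆ a ∈ A, (f a : EReal)

/-- The recession cone `S_∞` of a set `S`. -/
def recessionCone (S : Set X) : Set X :=
  {u | ∃ t : ℕ → ℝ, (∀ n, 0 < t n) ∧ Tendsto t atTop (𝓝 0) ∧
       ∃ a : ℕ → X, (∀ n, a n ∈ S) ∧ Tendsto (fun n => t n • a n) atTop (𝓝 u)}

/-- The negative dual cone `P⁻ = {x* : ⟨x, x*⟩ ≤ 0 for all x ∈ P}`. -/
def negDual (P : Set X) : Set (X →L[ℝ] ℝ) := {f | ∀ x ∈ P, f x ≤ 0}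

/-- The subdifferential of the support function of `A` at `f`:
`{u : ⟨u, g - f⟩ ≤ σ_A(g) - σ_A(f) for all g}` (empty when `σ_A(f) = +∞`). -/
def subdiff (A : Set X) (f : X →L[ℝ] ℝ) : Set X :=
  {u | supportFn A f ≠ ⊤ ∧
       ∀ g : X →L[ℝ] ℝ, supportFn A f + ((g u - f u : ℝ) : EReal) ≤ supportFn A g}

/-- The set `W_A(x*) = {a ∈ A : ⟨a, x*⟩ = σ_A(x*)}`. -/
def Wset (A : Set X) (f : X →L[ℝ] ℝ) : Set X := {a ∈ A | (f a : EReal) = supportFn A f}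

/-!
A functional `f` in the interior of `P⁻` is strictly negative on `P \ {0}`, hence on every
nonzero recession direction of `A`. A superlevel set `{a ∈ A | c ≤ f a}` is closed, and if it
were unbounded its normalized points would accumulate at a nonzero recession direction `u` with
`f u ≥ 0`. So the superlevel sets are compact, `f` attains its maximum on `A`, and `W_A(f)` is a
closed subset of one of them.
-/

theorem recessionCone_mono {S T : Set X} (h : S ⊆ T) : recessionCone S ⊆ recessionCone T :=
  fun _ ⟨t, ht, ht0, a, haS, hlim⟩ => ⟨t, ht, ht0, a, fun n => h (haS n), hlim⟩

theorem apply_nonneg_of_mem_recessionCone {S : Set X} (f : X →L[ℝ] ℝ) {c : ℝ}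
    (hc : ∀ a ∈ S, c ≤ f a) {u : X} (hu : u ∈ recessionCone S) : 0 ≤ f u := by
  obtain ⟨t, ht, ht0, a, haS, hlim⟩ := hu
  have hlow : Tendsto (fun n => t n * c) atTop (𝓝 0) := by simpa using ht0.mul_const c
  refine le_of_tendsto_of_tendsto' hlow ((f.continuous.tendsto u).comp hlim) fun n => ?_
  simpa only [Function.comp_apply, map_smul, smul_eq_mul] using
    mul_le_mul_of_nonneg_left (hc (a n) (haS n)) (ht n).le

theorem exists_ne_zero_mem_recessionCone [ProperSpace X] {S : Set X}
    (hS : ¬ Bornology.IsBounded S) : ∃ u ∈ recessionCone S, u ≠ 0 := by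
  simp only [isBounded_iff_forall_norm_le, not_exists, not_forall, not_le] at hS
  choose a haS hna using fun n : ℕ => hS n
  have hnorm : Tendsto (fun n => ‖a n‖) atTop atTop :=
    tendsto_atTop_mono (fun n => (hna n).le) tendsto_natCast_atTop_atTop
  have hpos : ∀ n, 0 < ‖a n‖ := fun n => (Nat.cast_nonneg n).trans_lt (hna n)
  have hsphere : ∀ n, ‖a n‖⁻¹ • a n ∈ Metric.sphere (0 : X) 1 := fun n => by
    rw [mem_sphere_zero_iff_norm, norm_smul, norm_inv, norm_norm, inv_mul_cancel₀ (hpos n).ne']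
  obtain ⟨u, hu, φ, hφ, hlim⟩ := (isCompact_sphere (0 : X) 1).tendsto_subseq hsphere
  refine ⟨u, ⟨fun n => ‖a (φ n)‖⁻¹, fun n => inv_pos.mpr (hpos (φ n)),
    (hnorm.comp hφ.tendsto_atTop).inv_tendsto_atTop, fun n => a (φ n), fun n => haS (φ n), hlim⟩,
    ne_zero_of_mem_unit_sphere ⟨u, hu⟩⟩

theorem isCompact_inter_setOf_le_of_recessionCone [ProperSpace X] {A : Set X}
    (hA : IsClosed A) (f : X →L[ℝ] ℝ) (hf : ∀ u ∈ recessionCone A, u ≠ 0 → f u < 0) (c : ℝ) :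
    IsCompact (A ∩ {a | c ≤ f a}) := by
  refine Metric.isCompact_of_isClosed_isBounded
    (hA.inter (isClosed_le continuous_const f.continuous)) ?_
  by_contra hunb
  obtain ⟨u, hu, hu0⟩ := exists_ne_zero_mem_recessionCone hunb
  have hnonneg : 0 ≤ f u := apply_nonneg_of_mem_recessionCone f (fun a ha => ha.2) hu
  exact (hf u (recessionCone_mono inter_subset_left hu) hu0).not_ge hnonneg

theorem apply_neg_of_mem_interior_negDual {P : Set X} {f : X →L[ℝ] ℝ}
    (hf : f ∈ interior (negDual P)) {x : X} (hx : x ∈ P) (hx0 : x ≠ 0) : f x < 0 := by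
  obtain ⟨ε, hε, hball⟩ := Metric.mem_nhds_iff.mp (mem_interior_iff_mem_nhds.mp hf)
  obtain ⟨g, hg, hgx⟩ := exists_dual_vector ℝ x (norm_ne_zero_iff.mpr hx0)
  have hperturb : f + (ε / 2) • g ∈ Metric.ball f ε := by
    rw [Metric.mem_ball, dist_eq_norm, add_sub_cancel_left, norm_smul, hg, mul_one,
      Real.norm_of_nonneg (by positivity)]
    linarith
  have hle : f x + ε / 2 * ‖x‖ ≤ 0 := by
    simpa [hgx] using hball hperturb x hx
  have : 0 < ε / 2 * ‖x‖ := mul_pos (by positivity) (norm_pos_iff.mpr hx0)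
  linarith

theorem supportFn_eq_of_forall_le {A : Set X} {f : X →L[ℝ] ℝ} {b : X} (hb : b ∈ A)
    (hmax : ∀ a ∈ A, f a ≤ f b) : supportFn A f = f b :=
  le_antisymm (iSup₂_le fun a ha => EReal.coe_le_coe_iff.mpr (hmax a ha))
    (le_iSup₂ (f := fun a (_ : a ∈ A) => (f a : EReal)) b hb)

theorem Wset_eq_of_supportFn_eq {A : Set X} {f : X →L[ℝ] ℝ} {r : ℝ} (h : supportFn A f = r) :
    Wset A f = A ∩ f ⁻¹' {r} := by
  ext a
  simp only [Wset, h, EReal.coe_eq_coe_iff]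
  rfl

theorem stmt1_general [FiniteDimensional ℝ X]
    (A : Set X) (hA : A.Nonempty) (hAclosed : IsClosed A)
    (P : Set X) (hP : P = recessionCone (closure (convexHull ℝ A))) :
    ∀ f ∈ interior (negDual P),
      (Wset A f).Nonempty ∧ IsCompact (Wset A f) ∧
      ∃ a ∈ A, supportFn A f = (f a : EReal) := by
  intro f hf
  obtain ⟨a₀, ha₀⟩ := hA
  have hrec : ∀ u ∈ recessionCone A, u ≠ 0 → f u < 0 := fun u hu =>
    apply_neg_of_mem_interior_negDual hf
      (hP ▸ recessionCone_mono ((subset_convexHull ℝ A).trans subset_closure) hu)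
  have hS := isCompact_inter_setOf_le_of_recessionCone hAclosed f hrec (f a₀)
  have ha₀S : a₀ ∈ A ∩ {a | f a₀ ≤ f a} := ⟨ha₀, le_refl (f a₀)⟩
  obtain ⟨b, ⟨hbA, -⟩, hbmax⟩ := hS.exists_isMaxOn ⟨a₀, ha₀S⟩ f.continuous.continuousOn
  have hmax : ∀ a ∈ A, f a ≤ f b := fun a ha =>
    (le_total (f a₀) (f a)).elim (fun h => hbmax ⟨ha, h⟩) (·.trans (hbmax ha₀S))
  have hσ := supportFn_eq_of_forall_le hbA hmax
  rw [Wset_eq_of_supportFn_eq hσ]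
  refine ⟨⟨b, hbA, rfl⟩, hS.of_isClosed_subset
    (hAclosed.inter (isClosed_singleton.preimage f.continuous)) ?_, b, hbA, hσ⟩
  rintro a ⟨haA, hfab : f a = f b⟩
  exact ⟨haA, show f a₀ ≤ f a from hfab ▸ hbmax ha₀S⟩

/-- For a nonempty closed set `A` in a nontrivial finite-dimensional real
normed space whose closed convex hull has a pointed recession cone `P`, for every
`x* ∈ int P⁻` the set `W_A(x*)` is nonempty and compact; in particular the supremum
defining `σ_A(x*)` is attained on `A`. -/
theorem stmt1 [FiniteDimensional ℝ X] [Nontrivial X]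
    (A : Set X) (hA : A.Nonempty) (hAclosed : IsClosed A)
    (P : Set X) (hP : P = recessionCone (closure (convexHull ℝ A)))
    (hpointed : P ∩ (-P) = {0}) :
    ∀ f ∈ interior (negDual P),
      (Wset A f).Nonempty ∧ IsCompact (Wset A f) ∧
      ∃ a ∈ A, supportFn A f = (f a : EReal) :=
  stmt1_general A hA hAclosed P hP
end

section
/- Let X be a finite-dimensional real normed space, let K, A ⊂ X satisfy condition (H), and let F_A : K → ℝ₊ be defined by F_A(x) := max{t ≥ 0 : x ∈ tA} (with the convention 0·A := K). Then the following are equivalent: (a) A is convex; (b) F_A is quasiconcave on K; (c) F_A is concave on K. -/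
open Set Filter Topology Pointwise

variable {X : Type*} [NormedAddCommGroup X] [NormedSpace ℝ X]

/-- The set `t·A`, with the convention `0·A := K`. -/
noncomputable def scaled (K A : Set X) (t : ℝ) : Set X := if t = 0 then K else t • A

/-- `F_A(x) := max {t ≥ 0 : x ∈ tA}` (with the convention `0·A := K`), realized as a
supremum; under condition (H) the set `{t ≥ 0 : x ∈ tA}` is a compact interval
containing `0`, so the supremum is a maximum. -/
noncomputable def FA (K A : Set X) (x : X) : ℝ :=
  sSup {t : ℝ | 0 ≤ t ∧ x ∈ scaled K A t}

/-- `ℙA = {t • a : t > 0, a ∈ A}`. -/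
def posScaled (A : Set X) : Set X := {x | ∃ t : ℝ, 0 < t ∧ ∃ a ∈ A, x = t • a}

/-!
Under (H) the sets `t • A` decrease in `t ≥ 0`, so `F_A` is the largest `t` with `x ∈ t • A`,
and the maximum is attained because `A` is closed and bounded away from `0`. Hence
`A = {x ∈ K | 1 ≤ F_A x}`, so quasiconcavity of `F_A` gives convexity of `A`. Conversely, if
`A` is convex then `s • A + t • A = (s + t) • A`, and together with `t • A + K ⊆ t • A` this
makes `F_A` superadditive; being also superhomogeneous, `F_A` is concave.
-/

lemma exists_pos_le_norm_of_notMem {E : Type*} [SeminormedAddGroup E] {s : Set E}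
    (hs : IsClosed s) (h0 : (0 : E) ∉ s) : ∃ r > 0, ∀ a ∈ s, r ≤ ‖a‖ := by
  obtain ⟨r, hr, hball⟩ := Metric.isOpen_iff.1 hs.isOpen_compl 0 h0
  refine ⟨r, hr, fun a ha => not_lt.1 fun har => hball ?_ ha⟩
  rwa [Metric.mem_ball, dist_zero_right]

section

variable {K A : Set X}

@[simp] lemma scaled_zero : scaled K A 0 = K := if_pos rfl

lemma scaled_of_ne_zero {t : ℝ} (ht : t ≠ 0) : scaled K A t = t • A := if_neg ht

lemma smul_mem_of_one_le (hK : ∀ t : ℝ, 0 ≤ t → ∀ x ∈ K, t • x ∈ K) (hAK : A + K ⊆ A)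
    (hAsubK : A ⊆ K) {a : X} (ha : a ∈ A) {c : ℝ} (hc : 1 ≤ c) : c • a ∈ A := by
  have hca : c • a = a + (c - 1) • a := by rw [sub_smul, one_smul, add_sub_cancel]
  rw [hca]
  exact hAK (add_mem_add ha (hK _ (sub_nonneg.2 hc) a (hAsubK ha)))

lemma scaled_subset_scaled (hK : ∀ t : ℝ, 0 ≤ t → ∀ x ∈ K, t • x ∈ K) (hAK : A + K ⊆ A)
    (hAsubK : A ⊆ K) {s t : ℝ} (hs : 0 ≤ s) (hst : s ≤ t) :
    scaled K A t ⊆ scaled K A s := by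
  rcases hs.eq_or_lt with rfl | hs
  · rcases hst.eq_or_lt with rfl | ht
    · exact subset_rfl
    · rw [scaled_of_ne_zero ht.ne', scaled_zero]
      rintro _ ⟨a, ha, rfl⟩
      exact hK t ht.le a (hAsubK ha)
  · rw [scaled_of_ne_zero (hs.trans_le hst).ne', scaled_of_ne_zero hs.ne']
    rintro _ ⟨a, ha, rfl⟩
    refine ⟨(t / s) • a, smul_mem_of_one_le hK hAK hAsubK ha ((one_le_div hs).2 hst), ?_⟩
    show s • (t / s) • a = t • a
    rw [smul_smul, mul_div_cancel₀ _ hs.ne']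

lemma add_mem_smul_set_of_mem_cone (hK : ∀ t : ℝ, 0 ≤ t → ∀ x ∈ K, t • x ∈ K)
    (hAK : A + K ⊆ A) {t : ℝ} (ht : 0 < t) {x y : X} (hx : x ∈ t • A) (hy : y ∈ K) :
    x + y ∈ t • A := by
  obtain ⟨a, ha, rfl⟩ := hx
  refine ⟨a + t⁻¹ • y, hAK (add_mem_add ha (hK _ (inv_nonneg.2 ht.le) y hy)), ?_⟩
  show t • (a + t⁻¹ • y) = t • a + y
  rw [smul_add, smul_inv_smul₀ ht.ne']

lemma smul_mem_scaled (hK : ∀ t : ℝ, 0 ≤ t → ∀ x ∈ K, t • x ∈ K) (hAK : A + K ⊆ A)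
    (hAsubK : A ⊆ K) {c t : ℝ} (hc : 0 ≤ c) (ht : 0 ≤ t) {x : X} (hx : x ∈ scaled K A t) :
    c • x ∈ scaled K A (c * t) := by
  have hxK : x ∈ K := by simpa using scaled_subset_scaled hK hAK hAsubK le_rfl ht hx
  rcases hc.eq_or_lt with rfl | hc
  · simpa using hK 0 le_rfl x hxK
  rcases ht.eq_or_lt with rfl | ht
  · simpa using hK c hc.le x hxK
  rw [scaled_of_ne_zero ht.ne'] at hx
  rw [scaled_of_ne_zero (mul_pos hc ht).ne', mul_smul]
  exact smul_mem_smul_set hx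

lemma add_mem_scaled (hKconv : Convex ℝ K) (hK : ∀ t : ℝ, 0 ≤ t → ∀ x ∈ K, t • x ∈ K)
    (hAK : A + K ⊆ A) (hA : Convex ℝ A) {s t : ℝ} (hs : 0 ≤ s) (ht : 0 ≤ t)
    {x y : X} (hx : x ∈ scaled K A s) (hy : y ∈ scaled K A t) :
    x + y ∈ scaled K A (s + t) := by
  rcases hs.eq_or_lt with rfl | hs <;> rcases ht.eq_or_lt with rfl | ht
  · rw [scaled_zero] at *
    obtain ⟨z, hz, hzxy⟩ : x + y ∈ (1 + 1 : ℝ) • K := by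
      rw [hKconv.add_smul zero_le_one zero_le_one, one_smul]
      exact add_mem_add hx hy
    rw [zero_add, scaled_zero, ← hzxy, one_add_one_eq_two]
    exact hK _ zero_le_two z hz
  · rw [scaled_zero] at hx
    rw [zero_add, scaled_of_ne_zero ht.ne'] at *
    rw [add_comm]
    exact add_mem_smul_set_of_mem_cone hK hAK ht hy hx
  · rw [scaled_zero] at hy
    rw [add_zero, scaled_of_ne_zero hs.ne'] at *
    exact add_mem_smul_set_of_mem_cone hK hAK hs hx hy
  · rw [scaled_of_ne_zero hs.ne'] at hx
    rw [scaled_of_ne_zero ht.ne'] at hy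
    rw [scaled_of_ne_zero (add_pos hs ht).ne', hA.add_smul hs.le ht.le]
    exact add_mem_add hx hy

lemma bddAbove_setOf_mem_scaled (hA : IsClosed A) (h0 : (0 : X) ∉ A) (x : X) :
    BddAbove {t : ℝ | 0 ≤ t ∧ x ∈ scaled K A t} := by
  obtain ⟨r, hr, hr_le⟩ := exists_pos_le_norm_of_notMem hA h0
  refine ⟨‖x‖ / r, fun t ⟨ht, hx⟩ => ?_⟩
  rcases ht.eq_or_lt with rfl | ht
  · positivity
  rw [scaled_of_ne_zero ht.ne'] at hx
  obtain ⟨a, ha, rfl⟩ := hx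
  rw [le_div_iff₀ hr, norm_smul, Real.norm_of_nonneg ht.le]
  exact mul_le_mul_of_nonneg_left (hr_le a ha) ht.le

lemma le_FA (hA : IsClosed A) (h0 : (0 : X) ∉ A) {t : ℝ} (ht : 0 ≤ t) {x : X}
    (hx : x ∈ scaled K A t) : t ≤ FA K A x :=
  le_csSup (bddAbove_setOf_mem_scaled hA h0 x) ⟨ht, hx⟩

lemma FA_nonneg (hA : IsClosed A) (h0 : (0 : X) ∉ A) {x : X} (hx : x ∈ K) : 0 ≤ FA K A x :=
  le_FA hA h0 le_rfl (by rwa [scaled_zero])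

lemma mem_scaled_FA (hA : IsClosed A) (h0 : (0 : X) ∉ A) {x : X} (hx : x ∈ K) :
    x ∈ scaled K A (FA K A x) := by
  set S := {t : ℝ | 0 ≤ t ∧ x ∈ scaled K A t}
  rcases (FA_nonneg hA h0 hx).eq_or_lt with hF | hF
  · rwa [← hF, scaled_zero]
  rw [scaled_of_ne_zero hF.ne', mem_smul_set_iff_inv_smul_mem₀ hF.ne']
  have hclosure : FA K A x ∈ closure (Ioi 0 ∩ S) :=
    isOpen_Ioi.inter_closure ⟨hF, csSup_mem_closure ⟨0, le_rfl, by rwa [scaled_zero]⟩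
      (bddAbove_setOf_mem_scaled hA h0 x)⟩
  have himage : (fun t : ℝ => t⁻¹ • x) '' (Ioi 0 ∩ S) ⊆ A := by
    rintro _ ⟨t, ⟨ht, -, hxt⟩, rfl⟩
    rw [scaled_of_ne_zero (ne_of_gt ht), mem_smul_set_iff_inv_smul_mem₀ (ne_of_gt ht)] at hxt
    exact hxt
  have hcont : ContinuousWithinAt (fun t : ℝ => t⁻¹ • x) (Ioi 0 ∩ S) (FA K A x) :=
    ((continuousAt_inv₀ hF.ne').smul continuousAt_const).continuousWithinAt
  exact hA.closure_subset_iff.2 himage (hcont.mem_closure_image hclosure)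

lemma mem_scaled_iff_le_FA (hK : ∀ t : ℝ, 0 ≤ t → ∀ x ∈ K, t • x ∈ K) (hAK : A + K ⊆ A)
    (hAsubK : A ⊆ K) (hA : IsClosed A) (h0 : (0 : X) ∉ A) {t : ℝ} (ht : 0 ≤ t) {x : X}
    (hx : x ∈ K) : x ∈ scaled K A t ↔ t ≤ FA K A x :=
  ⟨le_FA hA h0 ht, fun hle => scaled_subset_scaled hK hAK hAsubK ht hle (mem_scaled_FA hA h0 hx)⟩

lemma sep_one_le_FA_eq (hK : ∀ t : ℝ, 0 ≤ t → ∀ x ∈ K, t • x ∈ K) (hAK : A + K ⊆ A)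
    (hAsubK : A ⊆ K) (hA : IsClosed A) (h0 : (0 : X) ∉ A) : {x ∈ K | 1 ≤ FA K A x} = A := by
  ext x
  refine ⟨fun ⟨hx, h1⟩ => ?_, fun hx => ⟨hAsubK hx, ?_⟩⟩
  · simpa [scaled_of_ne_zero one_ne_zero] using
      (mem_scaled_iff_le_FA hK hAK hAsubK hA h0 zero_le_one hx).2 h1
  · exact le_FA hA h0 zero_le_one (by simpa [scaled_of_ne_zero one_ne_zero] using hx)

lemma mul_FA_le (hK : ∀ t : ℝ, 0 ≤ t → ∀ x ∈ K, t • x ∈ K) (hAK : A + K ⊆ A)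
    (hAsubK : A ⊆ K) (hA : IsClosed A) (h0 : (0 : X) ∉ A) {c : ℝ} (hc : 0 ≤ c) {x : X}
    (hx : x ∈ K) : c * FA K A x ≤ FA K A (c • x) :=
  le_FA hA h0 (mul_nonneg hc (FA_nonneg hA h0 hx))
    (smul_mem_scaled hK hAK hAsubK hc (FA_nonneg hA h0 hx) (mem_scaled_FA hA h0 hx))

lemma FA_add_FA_le (hKconv : Convex ℝ K) (hK : ∀ t : ℝ, 0 ≤ t → ∀ x ∈ K, t • x ∈ K)
    (hAK : A + K ⊆ A) (hAconv : Convex ℝ A) (hA : IsClosed A) (h0 : (0 : X) ∉ A) {x y : X}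
    (hx : x ∈ K) (hy : y ∈ K) : FA K A x + FA K A y ≤ FA K A (x + y) :=
  le_FA hA h0 (add_nonneg (FA_nonneg hA h0 hx) (FA_nonneg hA h0 hy))
    (add_mem_scaled hKconv hK hAK hAconv (FA_nonneg hA h0 hx) (FA_nonneg hA h0 hy)
      (mem_scaled_FA hA h0 hx) (mem_scaled_FA hA h0 hy))

lemma concaveOn_FA (hKconv : Convex ℝ K) (hK : ∀ t : ℝ, 0 ≤ t → ∀ x ∈ K, t • x ∈ K)
    (hAK : A + K ⊆ A) (hAsubK : A ⊆ K) (hAconv : Convex ℝ A) (hA : IsClosed A)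
    (h0 : (0 : X) ∉ A) : ConcaveOn ℝ K (FA K A) := by
  refine ⟨hKconv, fun x hx y hy a b ha hb _ => ?_⟩
  calc a • FA K A x + b • FA K A y
      ≤ FA K A (a • x) + FA K A (b • y) :=
        add_le_add (mul_FA_le hK hAK hAsubK hA h0 ha hx)
          (mul_FA_le hK hAK hAsubK hA h0 hb hy)
    _ ≤ FA K A (a • x + b • y) :=
        FA_add_FA_le hKconv hK hAK hAconv hA h0 (hK a ha x hx) (hK b hb y hy)

end

lemma quasiconcaveOn_iff_forall_Icc {E β : Type*} [AddCommMonoid E] [Module ℝ E] [LinearOrder β]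
    {s : Set E} (hs : Convex ℝ s) (f : E → β) :
    QuasiconcaveOn ℝ s f ↔ ∀ x ∈ s, ∀ y ∈ s, ∀ t ∈ Icc (0 : ℝ) 1,
      min (f x) (f y) ≤ f (t • x + (1 - t) • y) := by
  rw [quasiconcaveOn_iff_min_le, and_iff_right hs]
  refine ⟨fun h x hx y hy t ht => h hx hy ht.1 (sub_nonneg.2 ht.2) (add_sub_cancel _ _),
    fun h x hx y hy a b ha hb hab => ?_⟩
  obtain rfl : b = 1 - a := eq_sub_of_add_eq' hab
  exact h x hx y hy a ⟨ha, sub_nonneg.1 hb⟩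

theorem stmt14_general (K A : Set X)
    (hKconv : Convex ℝ K)
    (hKcone : ∀ t : ℝ, 0 ≤ t → ∀ x ∈ K, t • x ∈ K)
    (hAclosed : IsClosed A)
    (hAK : A + K = A) (hAsub : A ⊆ K \ {0}) :
    (Convex ℝ A ↔
      (∀ x ∈ K, ∀ y ∈ K, ∀ t : ℝ, t ∈ Icc (0 : ℝ) 1 →
        min (FA K A x) (FA K A y) ≤ FA K A (t • x + (1 - t) • y))) ∧
    ((∀ x ∈ K, ∀ y ∈ K, ∀ t : ℝ, t ∈ Icc (0 : ℝ) 1 →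
        min (FA K A x) (FA K A y) ≤ FA K A (t • x + (1 - t) • y)) ↔
      ConcaveOn ℝ K (FA K A)) := by
  have hAsubK : A ⊆ K := fun a ha => (hAsub ha).1
  have h0 : (0 : X) ∉ A := fun h => (hAsub h).2 rfl
  have hconcave : Convex ℝ A → ConcaveOn ℝ K (FA K A) := fun hAconv =>
    concaveOn_FA hKconv hKcone hAK.subset hAsubK hAconv hAclosed h0
  have hconvex : QuasiconcaveOn ℝ K (FA K A) → Convex ℝ A := fun hq =>
    sep_one_le_FA_eq hKcone hAK.subset hAsubK hAclosed h0 ▸ hq 1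
  rw [← quasiconcaveOn_iff_forall_Icc hKconv]
  exact ⟨⟨fun hAconv => (hconcave hAconv).quasiconcaveOn, hconvex⟩,
    ⟨fun hq => hconcave (hconvex hq), ConcaveOn.quasiconcaveOn⟩⟩

/-- Let `K, A` satisfy condition (H) in a finite-dimensional real normed
space. The following are equivalent: (a) `A` is convex; (b) `F_A` is quasiconcave on `K`;
(c) `F_A` is concave on `K`. -/
theorem stmt14 [FiniteDimensional ℝ X] [Nontrivial X]
    (hdim : 2 ≤ Module.finrank ℝ X)
    (K A : Set X)
    (hKconv : Convex ℝ K) (hKclosed : IsClosed K)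
    (hKcone : ∀ t : ℝ, 0 ≤ t → ∀ x ∈ K, t • x ∈ K)
    (hKpointed : K ∩ (-K) = {0}) (hKint : (interior K).Nonempty)
    (hAne : A.Nonempty) (hAclosed : IsClosed A)
    (hAK : A + K = A) (hAsub : A ⊆ K \ {0}) :
    (Convex ℝ A ↔
      (∀ x ∈ K, ∀ y ∈ K, ∀ t : ℝ, t ∈ Icc (0 : ℝ) 1 →
        min (FA K A x) (FA K A y) ≤ FA K A (t • x + (1 - t) • y))) ∧
    ((∀ x ∈ K, ∀ y ∈ K, ∀ t : ℝ, t ∈ Icc (0 : ℝ) 1 →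
        min (FA K A x) (FA K A y) ≤ FA K A (t • x + (1 - t) • y)) ↔
      ConcaveOn ℝ K (FA K A)) :=
  stmt14_general K A hKconv hKcone hAclosed hAK hAsub
end
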